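/- arXiv:2510.05082 — 3 statements merged into one kernel-verified Lean document; each statement's English description precedes it below -/
import Mathlib

section
/- Let D and D' be probability distributions on a finite set, |D⟩ and |D'⟩ the corresponding square-root amplitude unit vectors, and |⊥⟩ a unit vector orthogonal to all basis vectors |x⟩ (and hence to |D⟩ and |D'⟩). Define the compression operators U = |D⟩⟨⊥| + |⊥⟩⟨D| + (I − |⊥⟩⟨⊥| − |D⟩⟨D|) and U' = |D'⟩⟨⊥| + |⊥⟩⟨D'| + (I − |⊥⟩⟨⊥| − |D'⟩⟨D'|). Then for every unit vector |φ⟩, ‖(U − U')|φ⟩‖ ≤ 4·√(SD(D, D')). -/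
/-- For distributions D, D' on a finite set X, with square-root amplitude vectors
vD, vD' and an extra basis vector |⊥⟩ orthogonal to all |x⟩, the compression operators
U = |D⟩⟨⊥| + |⊥⟩⟨D| + (I − |⊥⟩⟨⊥| − |D⟩⟨D|) and U' (with D') satisfy
‖(U − U')φ‖ ≤ 4·√(SD(D,D')) for every unit vector φ. -/
theorem stmt5 {X : Type*} [Fintype X] [DecidableEq X]
    (D D' : X → ℝ) (hD0 : ∀ x, 0 ≤ D x) (hD'0 : ∀ x, 0 ≤ D' x)
    (hD1 : ∑ x, D x = 1) (hD'1 : ∑ x, D' x = 1)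
    (vD vD' bot : EuclideanSpace ℂ (Option X))
    (hvD : vD = (WithLp.equiv 2 (Option X → ℂ)).symm
      (fun o => Option.elim o 0 (fun x => (Real.sqrt (D x) : ℂ))))
    (hvD' : vD' = (WithLp.equiv 2 (Option X → ℂ)).symm
      (fun o => Option.elim o 0 (fun x => (Real.sqrt (D' x) : ℂ))))
    (hbot : bot = EuclideanSpace.single (none : Option X) (1 : ℂ)) :
    ∀ φ : EuclideanSpace ℂ (Option X), ‖φ‖ = 1 →
      ‖((inner ℂ bot φ : ℂ) • vD + (inner ℂ vD φ : ℂ) • bot +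
          (φ - (inner ℂ bot φ : ℂ) • bot - (inner ℂ vD φ : ℂ) • vD)) -
        ((inner ℂ bot φ : ℂ) • vD' + (inner ℂ vD' φ : ℂ) • bot +
          (φ - (inner ℂ bot φ : ℂ) • bot - (inner ℂ vD' φ : ℂ) • vD'))‖ ≤
        4 * Real.sqrt ((1 / 2) * ∑ x, |D x - D' x|) := by
  intro φ hφ
  -- basic facts
  have hbotnorm : ‖bot‖ = 1 := by
    rw [hbot, EuclideanSpace.norm_single]; simp
  have hvDnone : vD (none : Option X) = 0 := by rw [hvD]; rfl
  have hvD'none : vD' (none : Option X) = 0 := by rw [hvD']; rfl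
  have hvDsome : ∀ x, vD (some x) = (Real.sqrt (D x) : ℂ) := by
    intro x; rw [hvD]; rfl
  have hvD'some : ∀ x, vD' (some x) = (Real.sqrt (D' x) : ℂ) := by
    intro x; rw [hvD']; rfl
  have hnormsq : ∀ (v : EuclideanSpace ℂ (Option X)) (E : X → ℝ),
      (∀ x, 0 ≤ E x) → v none = 0 → (∀ x, v (some x) = (Real.sqrt (E x) : ℂ)) →
      ‖v‖ = Real.sqrt (∑ x, E x) := by
    intro v E hE0 h0 hs
    rw [EuclideanSpace.norm_eq]
    congr 1
    rw [Fintype.sum_option, h0]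
    simp only [norm_zero, zero_pow, ne_eq, OfNat.ofNat_ne_zero, not_false_eq_true, zero_add]
    refine Finset.sum_congr rfl fun x _ => ?_
    rw [hs x, Complex.norm_real, Real.norm_eq_abs, abs_of_nonneg (Real.sqrt_nonneg _),
      Real.sq_sqrt (hE0 x)]
  have hnD : ‖vD‖ = 1 := by
    rw [hnormsq vD D hD0 hvDnone hvDsome, hD1, Real.sqrt_one]
  have hnD' : ‖vD'‖ = 1 := by
    rw [hnormsq vD' D' hD'0 hvD'none hvD'some, hD'1, Real.sqrt_one]
  have hibD : (inner ℂ bot vD : ℂ) = 0 := by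
    rw [hbot, EuclideanSpace.inner_single_left, hvDnone]; simp
  have hibD' : (inner ℂ bot vD' : ℂ) = 0 := by
    rw [hbot, EuclideanSpace.inner_single_left, hvD'none]; simp
  have hsqrt2 : ∀ (v : EuclideanSpace ℂ (Option X)), ‖v‖ = 1 →
      (inner ℂ bot v : ℂ) = 0 → ‖bot - v‖ = Real.sqrt 2 := by
    intro v hv hi
    have h2 : ‖bot - v‖ ^ 2 = 2 := by
      rw [@norm_sub_sq ℂ, hbotnorm, hv, hi]
      norm_num
    rw [← h2, Real.sqrt_sq (norm_nonneg _)]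
  have hbv : ‖bot - vD‖ = Real.sqrt 2 := hsqrt2 vD hnD hibD
  have hbv' : ‖bot - vD'‖ = Real.sqrt 2 := hsqrt2 vD' hnD' hibD'
  -- norm of difference of amplitude vectors
  set w : EuclideanSpace ℂ (Option X) := vD - vD' with hw
  set s : ℝ := ∑ x, |D x - D' x| with hs
  have hs0 : 0 ≤ s := Finset.sum_nonneg fun x _ => abs_nonneg _
  have hwnorm : ‖w‖ ≤ Real.sqrt s := by
    rw [EuclideanSpace.norm_eq]
    apply Real.sqrt_le_sqrt
    rw [Fintype.sum_option]
    have h0 : w (none : Option X) = 0 := by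
      simp [hw, PiLp.sub_apply, hvDnone, hvD'none]
    rw [h0]
    simp only [norm_zero, ne_eq, OfNat.ofNat_ne_zero, not_false_eq_true, zero_pow, zero_add, hs]
    apply Finset.sum_le_sum
    intro x _
    have hwx : w (some x) = ((Real.sqrt (D x) - Real.sqrt (D' x) : ℝ) : ℂ) := by
      simp [hw, PiLp.sub_apply, hvDsome, hvD'some]
    rw [hwx, Complex.norm_real, Real.norm_eq_abs, sq_abs]
    have habs : |Real.sqrt (D x) - Real.sqrt (D' x)| ≤ Real.sqrt (D x) + Real.sqrt (D' x) :=
      (abs_sub _ _).trans (by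
        rw [abs_of_nonneg (Real.sqrt_nonneg _), abs_of_nonneg (Real.sqrt_nonneg _)])
    calc (Real.sqrt (D x) - Real.sqrt (D' x)) ^ 2
        = |Real.sqrt (D x) - Real.sqrt (D' x)| * |Real.sqrt (D x) - Real.sqrt (D' x)| := by
          rw [sq, abs_mul_abs_self]
      _ ≤ |Real.sqrt (D x) - Real.sqrt (D' x)| * (Real.sqrt (D x) + Real.sqrt (D' x)) := by
          apply mul_le_mul_of_nonneg_left habs (abs_nonneg _)
      _ = |Real.sqrt (D x) - Real.sqrt (D' x)| * |Real.sqrt (D x) + Real.sqrt (D' x)| := by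
          rw [abs_of_nonneg (by positivity : (0:ℝ) ≤ Real.sqrt (D x) + Real.sqrt (D' x))]
      _ = |(Real.sqrt (D x) - Real.sqrt (D' x)) * (Real.sqrt (D x) + Real.sqrt (D' x))| := by
          rw [abs_mul]
      _ = |D x - D' x| := by
          congr 1
          have h : (Real.sqrt (D x) - Real.sqrt (D' x)) * (Real.sqrt (D x) + Real.sqrt (D' x))
              = Real.sqrt (D x) ^ 2 - Real.sqrt (D' x) ^ 2 := by ring
          rw [h, Real.sq_sqrt (hD0 x), Real.sq_sqrt (hD'0 x)]
  -- rewrite the main vector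
  have key : ((inner ℂ bot φ : ℂ) • vD + (inner ℂ vD φ : ℂ) • bot +
          (φ - (inner ℂ bot φ : ℂ) • bot - (inner ℂ vD φ : ℂ) • vD)) -
        ((inner ℂ bot φ : ℂ) • vD' + (inner ℂ vD' φ : ℂ) • bot +
          (φ - (inner ℂ bot φ : ℂ) • bot - (inner ℂ vD' φ : ℂ) • vD'))
      = ((inner ℂ bot φ : ℂ) - (inner ℂ vD φ : ℂ)) • w
        + ((inner ℂ vD φ : ℂ) - (inner ℂ vD' φ : ℂ)) • (bot - vD') := by
    rw [hw]; module
  rw [key]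
  have h1 : ‖(inner ℂ bot φ : ℂ) - (inner ℂ vD φ : ℂ)‖ ≤ Real.sqrt 2 := by
    have : (inner ℂ bot φ : ℂ) - (inner ℂ vD φ : ℂ) = inner ℂ (bot - vD) φ := by
      rw [inner_sub_left]
    rw [this]
    calc ‖(inner ℂ (bot - vD) φ : ℂ)‖ ≤ ‖bot - vD‖ * ‖φ‖ := norm_inner_le_norm _ _
      _ = Real.sqrt 2 := by rw [hbv, hφ, mul_one]
  have h2 : ‖(inner ℂ vD φ : ℂ) - (inner ℂ vD' φ : ℂ)‖ ≤ ‖w‖ := by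
    have : (inner ℂ vD φ : ℂ) - (inner ℂ vD' φ : ℂ) = inner ℂ w φ := by
      rw [hw, inner_sub_left]
    rw [this]
    calc ‖(inner ℂ w φ : ℂ)‖ ≤ ‖w‖ * ‖φ‖ := norm_inner_le_norm _ _
      _ = ‖w‖ := by rw [hφ, mul_one]
  calc ‖((inner ℂ bot φ : ℂ) - (inner ℂ vD φ : ℂ)) • w
        + ((inner ℂ vD φ : ℂ) - (inner ℂ vD' φ : ℂ)) • (bot - vD')‖
      ≤ ‖((inner ℂ bot φ : ℂ) - (inner ℂ vD φ : ℂ)) • w‖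
        + ‖((inner ℂ vD φ : ℂ) - (inner ℂ vD' φ : ℂ)) • (bot - vD')‖ := norm_add_le _ _
    _ = ‖(inner ℂ bot φ : ℂ) - (inner ℂ vD φ : ℂ)‖ * ‖w‖
        + ‖(inner ℂ vD φ : ℂ) - (inner ℂ vD' φ : ℂ)‖ * ‖bot - vD'‖ := by
          rw [norm_smul, norm_smul]
    _ ≤ Real.sqrt 2 * Real.sqrt s + Real.sqrt s * Real.sqrt 2 := by
          apply add_le_add
          · exact mul_le_mul h1 hwnorm (norm_nonneg _) (Real.sqrt_nonneg _)
          · rw [hbv']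
            exact mul_le_mul_of_nonneg_right (h2.trans hwnorm) (Real.sqrt_nonneg _)
    _ = 2 * (Real.sqrt 2 * Real.sqrt s) := by ring
    _ = 4 * Real.sqrt ((1 / 2) * s) := by
          rw [← Real.sqrt_mul (by norm_num : (0:ℝ) ≤ 2) s]
          rw [show (2:ℝ) * s = 4 * ((1/2) * s) by ring,
            Real.sqrt_mul (by norm_num : (0:ℝ) ≤ 4),
            show Real.sqrt 4 = 2 by
              rw [show (4:ℝ) = 2^2 by norm_num, Real.sqrt_sq (by norm_num)]]
          ring
end

section
/- Let {|s⟩} be an orthonormal family, p_s, p'_s nonnegative with Σ p_s = Σ p'_s = 1, and |Ψ⟩ = Σ_s √(p_s)|s⟩|ψ_s⟩, |Ψ'⟩ = Σ_s √(p'_s)|s⟩|ψ'_s⟩ with each |ψ_s⟩, |ψ'_s⟩ a unit vector. Suppose S is a set of indices with TD(|ψ_s⟩,|ψ'_s⟩) ≥ τ for all s ∈ S. Then for every real θ, ‖|Ψ⟩ − e^{iθ}|Ψ'⟩‖² ≥ τ²·Σ_{s∈S} p_s, and consequently TD(|Ψ⟩, |Ψ'⟩) ≥ (τ/√2)·√(Σ_{s∈S}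 p_s). -/
lemma comp9 {H : Type*} [NormedAddCommGroup H] [InnerProductSpace ℂ H]
    (a b : ℝ) (ha : 0 ≤ a) (hb : 0 ≤ b) (e : ℂ) (he : ‖e‖ = 1)
    (u v : H) (hu : ‖u‖ = 1) (hv : ‖v‖ = 1) :
    a ^ 2 * (1 - ‖(inner ℂ u v : ℂ)‖ ^ 2) ≤ ‖(a : ℂ) • u - e • ((b : ℂ) • v)‖ ^ 2 := by
  set c : ℂ := inner ℂ u v with hc
  have hexp := @norm_sub_sq ℂ _ _ _ _ ((a : ℂ) • u) (e • ((b : ℂ) • v))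
  have hin : (inner ℂ ((a : ℂ) • u) (e • ((b : ℂ) • v)) : ℂ) = (a : ℂ) * (e * (b * c)) := by
    rw [inner_smul_left, inner_smul_right, inner_smul_right, Complex.conj_ofReal]
  have hnu : ‖(a : ℂ) • u‖ = a := by
    rw [norm_smul, hu, Complex.norm_real, Real.norm_of_nonneg ha, mul_one]
  have hnv : ‖e • ((b : ℂ) • v)‖ = b := by
    rw [norm_smul, norm_smul, he, hv, Complex.norm_real, Real.norm_of_nonneg hb]
    ring
  have hre : RCLike.re ((a : ℂ) * (e * (b * c))) ≤ a * b * ‖c‖ := by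
    calc RCLike.re ((a : ℂ) * (e * (b * c))) ≤ ‖(a : ℂ) * (e * (b * c))‖ :=
          RCLike.re_le_norm _
      _ = a * b * ‖c‖ := by
          rw [norm_mul, norm_mul, norm_mul, he, Complex.norm_real, Complex.norm_real,
            Real.norm_of_nonneg ha, Real.norm_of_nonneg hb]; ring
  rw [hexp, hin, hnu, hnv]
  nlinarith [sq_nonneg (b - a * ‖c‖), norm_nonneg c, mul_nonneg ha hb]



/-- For |Ψ⟩ = Σ_s √(p_s)|s⟩|ψ_s⟩ and |Ψ'⟩ = Σ_s √(p'_s)|s⟩|ψ'_s⟩ (modelled in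
the ℓ²-direct sum over the index s), if TD(ψ_s, ψ'_s) ≥ τ for all s in S, then for
every θ, ‖Ψ − e^{iθ}Ψ'‖² ≥ τ²·Σ_{s∈S} p_s, and consequently
TD(Ψ, Ψ') ≥ (τ/√2)·√(Σ_{s∈S} p_s). -/
theorem stmt9 {ι H : Type*} [Fintype ι]
    [NormedAddCommGroup H] [InnerProductSpace ℂ H]
    (p p' : ι → ℝ) (hp : ∀ s, 0 ≤ p s) (hp' : ∀ s, 0 ≤ p' s)
    (hp1 : ∑ s, p s = 1) (hp'1 : ∑ s, p' s = 1)
    (ψ ψ' : ι → H) (hψ : ∀ s, ‖ψ s‖ = 1) (hψ' : ∀ s, ‖ψ' s‖ = 1)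
    (S : Finset ι) (τ : ℝ) (hτ0 : 0 ≤ τ)
    (hτ : ∀ s ∈ S, τ ≤ Real.sqrt (1 - ‖(inner ℂ (ψ s) (ψ' s) : ℂ)‖ ^ 2))
    (Ψ Ψ' : PiLp 2 (fun _ : ι => H))
    (hΨ : Ψ = (WithLp.equiv 2 (∀ _ : ι, H)).symm (fun s => (Real.sqrt (p s) : ℂ) • ψ s))
    (hΨ' : Ψ' = (WithLp.equiv 2 (∀ _ : ι, H)).symm (fun s => (Real.sqrt (p' s) : ℂ) • ψ' s)) :
    (∀ θ : ℝ, τ ^ 2 * ∑ s ∈ S, p s ≤ ‖Ψ - Complex.exp (θ * Complex.I) • Ψ'‖ ^ 2) ∧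
      (τ / Real.sqrt 2) * Real.sqrt (∑ s ∈ S, p s) ≤
        Real.sqrt (1 - ‖(inner ℂ Ψ Ψ' : ℂ)‖ ^ 2) := by
  have hc1 : ∀ s, ‖(inner ℂ (ψ s) (ψ' s) : ℂ)‖ ≤ 1 := fun s => by
    simpa [hψ s, hψ' s] using norm_inner_le_norm (𝕜 := ℂ) (ψ s) (ψ' s)
  -- key inequality for any phase e with ‖e‖ = 1
  have key : ∀ e : ℂ, ‖e‖ = 1 → τ ^ 2 * ∑ s ∈ S, p s ≤ ‖Ψ - e • Ψ'‖ ^ 2 := by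
    intro e he
    have hnorm : ‖Ψ - e • Ψ'‖ ^ 2 =
        ∑ s, ‖(Real.sqrt (p s) : ℂ) • ψ s - e • ((Real.sqrt (p' s) : ℂ) • ψ' s)‖ ^ 2 := by
      rw [PiLp.norm_sq_eq_of_L2]
      refine Finset.sum_congr rfl fun s _ => ?_
      rw [hΨ, hΨ']
      simp [PiLp.sub_apply, PiLp.smul_apply, WithLp.equiv_symm_apply, PiLp.toLp_apply]
    rw [hnorm, Finset.mul_sum]
    refine le_trans (Finset.sum_le_sum fun s hs => ?_)
      (Finset.sum_le_sum_of_subset_of_nonneg (Finset.subset_univ S)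
        (fun s _ _ => by positivity))
    · have h0 : (0:ℝ) ≤ 1 - ‖(inner ℂ (ψ s) (ψ' s) : ℂ)‖ ^ 2 := by
        nlinarith [hc1 s, norm_nonneg (inner ℂ (ψ s) (ψ' s) : ℂ)]
      have hτs : τ ^ 2 ≤ 1 - ‖(inner ℂ (ψ s) (ψ' s) : ℂ)‖ ^ 2 := by
        have := hτ s hs
        nlinarith [Real.sq_sqrt h0, Real.sqrt_nonneg (1 - ‖(inner ℂ (ψ s) (ψ' s) : ℂ)‖ ^ 2)]
      calc τ ^ 2 * p s ≤ (1 - ‖(inner ℂ (ψ s) (ψ' s) : ℂ)‖ ^ 2) * p s := by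
            exact mul_le_mul_of_nonneg_right hτs (hp s)
        _ = Real.sqrt (p s) ^ 2 * (1 - ‖(inner ℂ (ψ s) (ψ' s) : ℂ)‖ ^ 2) := by
            rw [Real.sq_sqrt (hp s)]; ring
        _ ≤ _ := comp9 _ _ (Real.sqrt_nonneg _) (Real.sqrt_nonneg _) e he _ _ (hψ s) (hψ' s)
  have hΨnorm : ‖Ψ‖ = 1 := by
    have h2 : ‖Ψ‖ ^ 2 = 1 := by
      rw [PiLp.norm_sq_eq_of_L2, ← hp1]
      refine Finset.sum_congr rfl fun s _ => ?_
      rw [hΨ]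
      simp [WithLp.equiv_symm_apply, PiLp.toLp_apply, norm_smul, hψ s, Complex.norm_real,
        Real.norm_of_nonneg (Real.sqrt_nonneg _), Real.sq_sqrt (hp s)]
    nlinarith [norm_nonneg Ψ]
  have hΨ'norm : ‖Ψ'‖ = 1 := by
    have h2 : ‖Ψ'‖ ^ 2 = 1 := by
      rw [PiLp.norm_sq_eq_of_L2, ← hp'1]
      refine Finset.sum_congr rfl fun s _ => ?_
      rw [hΨ']
      simp [WithLp.equiv_symm_apply, PiLp.toLp_apply, norm_smul, hψ' s, Complex.norm_real,
        Real.norm_of_nonneg (Real.sqrt_nonneg _), Real.sq_sqrt (hp' s)]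
    nlinarith [norm_nonneg Ψ']
  refine ⟨fun θ => key _ (by rw [Complex.norm_exp_ofReal_mul_I]), ?_⟩
  set c : ℂ := inner ℂ Ψ Ψ' with hcdef
  have hcle : ‖c‖ ≤ 1 := by
    simpa [hΨnorm, hΨ'norm] using norm_inner_le_norm (𝕜 := ℂ) Ψ Ψ'
  set e : ℂ := Complex.exp ((-c.arg : ℝ) * Complex.I) with hedef
  have he : ‖e‖ = 1 := by rw [hedef, Complex.norm_exp_ofReal_mul_I]
  have hec : e * c = (‖c‖ : ℂ) := by
    by_cases h0 : c = 0
    · simp [h0]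
    · have habs := Complex.norm_mul_exp_arg_mul_I c
      calc e * c = e * ((‖c‖ : ℂ) * Complex.exp (c.arg * Complex.I)) := by
            rw [habs]
        _ = (‖c‖ : ℂ) *
              (Complex.exp ((-c.arg : ℝ) * Complex.I) * Complex.exp (c.arg * Complex.I)) := by
            rw [hedef]; ring
        _ = (‖c‖ : ℂ) := by
            rw [← Complex.exp_add]
            push_cast
            ring_nf
            simp
  have hsq : ‖Ψ - e • Ψ'‖ ^ 2 = 2 - 2 * ‖c‖ := by
    rw [norm_sub_sq (𝕜 := ℂ), hΨnorm, norm_smul, he, hΨ'norm, inner_smul_right, ← hcdef, hec]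
    simp [Complex.ofReal_re]
    ring
  have h1 := key e he
  rw [hsq] at h1
  have hP0 : (0:ℝ) ≤ ∑ s ∈ S, p s := Finset.sum_nonneg fun s _ => hp s
  have h2 : τ ^ 2 * (∑ s ∈ S, p s) / 2 ≤ 1 - ‖c‖ ^ 2 := by
    nlinarith [norm_nonneg c]
  calc τ / Real.sqrt 2 * Real.sqrt (∑ s ∈ S, p s)
      = Real.sqrt (τ ^ 2 * (∑ s ∈ S, p s) / 2) := by
        rw [show τ ^ 2 * (∑ s ∈ S, p s) / 2 = (τ / Real.sqrt 2) ^ 2 * (∑ s ∈ S, p s) by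
          rw [div_pow, Real.sq_sqrt (by norm_num : (0:ℝ) ≤ 2)]; ring,
          Real.sqrt_mul (sq_nonneg _),
          Real.sqrt_sq (div_nonneg hτ0 (Real.sqrt_nonneg 2))]
    _ ≤ Real.sqrt (1 - ‖c‖ ^ 2) := Real.sqrt_le_sqrt h2
end

section
/- Fix a constant ℓ ≥ 1 and a real Δ̃ ∈ (0,1]. Define τ_i := Δ̃^{1/4^i} for i ≥ 1, τ_0 := 0. Suppose sequences Δ_0, …, Δ_ℓ and δ_1, …, δ_ℓ of nonnegative reals satisfy Δ_0 ≤ Δ̃ and, for every i ∈ [ℓ], δ_i ≤ (C·q²·√(Δ_{i−1}) + C·q·τ_{i−1})/τ_i + C·q·Δ̃ and Δ_i ≤ Δ_{i−1} + δ_i, for some constants C ≥ 1 and q ≥ 1. Then there is a polynomial P in q (depending only on ℓ and C) such that Δ_i ≤ P(q)·Δ̃^{1/4^i} for all i ∈ [0,ℓ], and consequently Σ_{i=1}^ℓ δ_i ≤ P'(q)·Δ̃^{1/4^ℓ} for some polynomial P'. -/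
set_option maxHeartbeats 1600000 in
/-- Arithmetic recursion of the hybrid argument in the oracle separation: with
τ_0 = 0 and τ_i = Δ̃^{1/4^i}, if Δ_0 ≤ Δ̃ and
δ_i ≤ (C·q²·√(Δ_{i−1}) + C·q·τ_{i−1})/τ_i + C·q·Δ̃ and Δ_i ≤ Δ_{i−1} + δ_i for
i ∈ [ℓ], then there are polynomials P, P' (depending only on ℓ and C) with
Δ_i ≤ P(q)·Δ̃^{1/4^i} for all i ≤ ℓ and Σ_{i=1}^ℓ δ_i ≤ P'(q)·Δ̃^{1/4^ℓ}. -/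
theorem stmt14 (ℓ : ℕ) (C : ℝ) (hC : 1 ≤ C) :
    ∃ P P' : Polynomial ℝ,
      ∀ (Δt q : ℝ) (Δ δ : ℕ → ℝ),
        0 < Δt → Δt ≤ 1 → 1 ≤ q →
        (∀ i, 0 ≤ Δ i) → (∀ i, 0 ≤ δ i) →
        Δ 0 ≤ Δt →
        (∀ i ∈ Finset.Icc 1 ℓ,
          δ i ≤ (C * q ^ 2 * Real.sqrt (Δ (i - 1)) +
                  C * q * (if i - 1 = 0 then 0 else Δt ^ ((1 : ℝ) / (4 : ℝ) ^ (i - 1)))) /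
                  (Δt ^ ((1 : ℝ) / (4 : ℝ) ^ i)) +
                C * q * Δt ∧
            Δ i ≤ Δ (i - 1) + δ i) →
        (∀ i ≤ ℓ, Δ i ≤ P.eval q * Δt ^ ((1 : ℝ) / (4 : ℝ) ^ i)) ∧
          ∑ i ∈ Finset.Icc 1 ℓ, δ i ≤ P'.eval q * Δt ^ ((1 : ℝ) / (4 : ℝ) ^ ℓ) := by
  refine ⟨Polynomial.C ((4*C)^ℓ) * Polynomial.X^4,
          Polynomial.C ((ℓ:ℝ) * (3*C*(4*C)^ℓ)) * Polynomial.X^4, ?_⟩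
  intro Δt q Δ δ ht0 ht1 hq hΔnn hδnn hbase hrec
  simp only [Polynomial.eval_mul, Polynomial.eval_C, Polynomial.eval_pow, Polynomial.eval_X]
  have hq0 : (0:ℝ) < q := lt_of_lt_of_le one_pos hq
  have hC0 : (0:ℝ) < C := lt_of_lt_of_le one_pos hC
  have h4C : (1:ℝ) ≤ 4*C := by linarith
  have hτpos : ∀ i : ℕ, 0 < Δt ^ ((1:ℝ)/(4:ℝ)^i) := fun i => Real.rpow_pos_of_pos ht0 _
  have hτle1 : ∀ i : ℕ, Δt ^ ((1:ℝ)/(4:ℝ)^i) ≤ 1 :=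
    fun i => Real.rpow_le_one ht0.le ht1 (by positivity)
  have hτmono : ∀ i j : ℕ, i ≤ j → Δt ^ ((1:ℝ)/(4:ℝ)^i) ≤ Δt ^ ((1:ℝ)/(4:ℝ)^j) := by
    intro i j hij
    apply Real.rpow_le_rpow_of_exponent_ge ht0 ht1
    apply div_le_div_of_nonneg_left one_pos.le (by positivity)
    exact pow_le_pow_right₀ (by norm_num) hij
  have hΔtτ : ∀ i : ℕ, Δt ≤ Δt ^ ((1:ℝ)/(4:ℝ)^i) := by
    intro i
    calc Δt = Δt ^ (1:ℝ) := (Real.rpow_one Δt).symm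
    _ ≤ _ := by
        apply Real.rpow_le_rpow_of_exponent_ge ht0 ht1
        rw [div_le_one (by positivity)]
        exact one_le_pow₀ (by norm_num)
  have hτ4 : ∀ i : ℕ, Δt ^ ((1:ℝ)/(4:ℝ)^i) = (Δt ^ ((1:ℝ)/(4:ℝ)^(i+1)))^(4:ℕ) := by
    intro i
    rw [← Real.rpow_natCast (Δt ^ ((1:ℝ)/(4:ℝ)^(i+1))) 4, ← Real.rpow_mul ht0.le]
    have he : (1:ℝ)/(4:ℝ)^(i+1) * ((4:ℕ):ℝ) = (1:ℝ)/(4:ℝ)^i := by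
      have h4 : ((4:ℝ))^i ≠ 0 := by positivity
      push_cast
      rw [pow_succ]
      field_simp
    rw [he]
  -- main induction
  have key : ∀ i, i ≤ ℓ → Δ i ≤ (4*C)^i * q^4 * Δt ^ ((1:ℝ)/(4:ℝ)^i) ∧
      (1 ≤ i → δ i ≤ 3*C*(4*C)^ℓ * q^4 * Δt ^ ((1:ℝ)/(4:ℝ)^ℓ)) := by
    intro i
    induction i with
    | zero =>
      intro _
      refine ⟨?_, by omega⟩
      simp only [pow_zero, one_mul]
      calc Δ 0 ≤ Δt := hbase
      _ ≤ Δt ^ ((1:ℝ)/(4:ℝ)^(0:ℕ)) := hΔtτ 0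
      _ ≤ q^4 * Δt ^ ((1:ℝ)/(4:ℝ)^(0:ℕ)) := by
          nlinarith [mul_le_mul_of_nonneg_right (one_le_pow₀ hq (n := 4)) (hτpos 0).le]
    | succ i ih =>
      intro hle
      have hile : i ≤ ℓ := by omega
      obtain ⟨hΔi, _⟩ := ih hile
      obtain ⟨hδb, hΔb⟩ := hrec (i+1) (by simp [Finset.mem_Icc]; omega)
      simp only [Nat.add_sub_cancel] at hδb hΔb
      set t := Δt ^ ((1:ℝ)/(4:ℝ)^(i+1)) with hti
      set s := Δt ^ ((1:ℝ)/(4:ℝ)^i) with hsi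
      have ht : 0 < t := hτpos (i+1)
      have ht1' : t ≤ 1 := hτle1 (i+1)
      have hτit : s = t^(4:ℕ) := hτ4 i
      have hq4 : (1:ℝ) ≤ q^4 := one_le_pow₀ hq
      have hqq4 : q ≤ q^4 := le_self_pow₀ hq (by norm_num)
      have h4Ci : (1:ℝ) ≤ (4*C)^i := one_le_pow₀ h4C
      have ht2 : t^2 ≤ 1 := by nlinarith
      have hΔtt : Δt ≤ t := hΔtτ (i+1)
      have htℓ : t ≤ Δt ^ ((1:ℝ)/(4:ℝ)^ℓ) := hτmono (i+1) ℓ hle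
      clear_value t s
      -- sqrt bound
      have hsq : Real.sqrt (Δ i) ≤ (4*C)^i * q^2 * t^2 := by
        have hB : (0:ℝ) ≤ (4*C)^i * q^2 * t^2 := by positivity
        have h1 : Δ i ≤ (4*C)^i * q^4 * t^4 := by
          rw [hτit] at hΔi; exact_mod_cast hΔi
        have hKK : (4*C)^i ≤ (4*C)^i * (4*C)^i := by nlinarith
        have h2 : Δ i ≤ ((4*C)^i * q^2 * t^2)^2 := by
          nlinarith [mul_le_mul_of_nonneg_right hKK
            (show (0:ℝ) ≤ q^4 * t^4 by positivity)]
        calc Real.sqrt (Δ i) ≤ Real.sqrt (((4*C)^i * q^2 * t^2)^2) := Real.sqrt_le_sqrt h2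
        _ = (4*C)^i * q^2 * t^2 := Real.sqrt_sq hB
      -- if-term bound
      have hif : (if i = 0 then (0:ℝ) else s) ≤ t^2 := by
        split_ifs
        · positivity
        · rw [hτit]
          calc t^(4:ℕ) = t^2 * t^2 := by ring
          _ ≤ 1 * t^2 := by nlinarith [sq_nonneg t]
          _ = t^2 := one_mul _
      -- numerator bound
      have h1 : C * q^2 * Real.sqrt (Δ i) ≤ C*(4*C)^i*q^4 * t^2 := by
        calc C * q^2 * Real.sqrt (Δ i) ≤ C*q^2*((4*C)^i * q^2 * t^2) :=
              mul_le_mul_of_nonneg_left hsq (by positivity)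
        _ = C*(4*C)^i*q^4 * t^2 := by ring
      have h2 : C * q * (if i = 0 then (0:ℝ) else s) ≤ C*q*(t^2) :=
        mul_le_mul_of_nonneg_left hif (by positivity)
      have hnum : C * q^2 * Real.sqrt (Δ i) + C * q * (if i = 0 then (0:ℝ) else s)
          ≤ (C*(4*C)^i*q^4 + C*q) * t * t := by nlinarith
      have hdiv : (C * q^2 * Real.sqrt (Δ i) + C * q * (if i = 0 then (0:ℝ) else s)) / t
          ≤ (C*(4*C)^i*q^4 + C*q) * t := by
        rw [div_le_iff₀ ht]; exact hnum
      have hlast : C * q * Δt ≤ C * q * t :=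
        mul_le_mul_of_nonneg_left hΔtt (by positivity)
      have hδi1 : δ (i+1) ≤ 3*C*(4*C)^i * q^4 * t := by
        have hstep : δ (i+1) ≤ (C*(4*C)^i*q^4 + C*q) * t + C*q*t :=
          le_trans hδb (add_le_add hdiv hlast)
        have hco : C*q ≤ C*(4*C)^i*q^4 := by
          calc C*q ≤ C*q^4 := mul_le_mul_of_nonneg_left hqq4 hC0.le
          _ = C*1*q^4 := by ring
          _ ≤ C*(4*C)^i*q^4 := by
              have := mul_le_mul_of_nonneg_right h4Ci (show (0:ℝ) ≤ q^4 by positivity)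
              nlinarith
        nlinarith [mul_le_mul_of_nonneg_right hco ht.le]
      constructor
      · have ht4 : t^(4:ℕ) ≤ t := pow_le_of_le_one ht.le ht1' (by norm_num)
        have hKq : (0:ℝ) ≤ (4*C)^i * q^4 := by positivity
        calc Δ (i+1) ≤ Δ i + δ (i+1) := hΔb
        _ ≤ (4*C)^i * q^4 * t^(4:ℕ) + 3*C*(4*C)^i * q^4 * t := by
            rw [← hτit]; exact add_le_add hΔi hδi1
        _ ≤ (4*C)^(i+1) * q^4 * t := by
            have e : (4*C)^(i+1) * q^4 * t = 4*(C*((4*C)^i * q^4 * t)) := by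
              rw [pow_succ]; ring
            have hh := mul_le_mul_of_nonneg_left ht4 hKq
            have hcc : 0 ≤ (C-1) * ((4*C)^i * q^4 * t) :=
              mul_nonneg (by linarith) (mul_nonneg hKq ht.le)
            nlinarith [e.le, e.ge, hh, hcc]
      · intro _
        calc δ (i+1) ≤ 3*C*(4*C)^i * q^4 * t := hδi1
        _ ≤ 3*C*(4*C)^ℓ * q^4 * Δt ^ ((1:ℝ)/(4:ℝ)^ℓ) := by
            have hp1 : (4*C)^i ≤ (4*C)^ℓ := pow_le_pow_right₀ h4C hile
            have hp2 : t ≤ Δt ^ ((1:ℝ)/(4:ℝ)^ℓ) := htℓ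
            have := hτpos ℓ
            nlinarith [mul_le_mul_of_nonneg_right hp2 (show (0:ℝ) ≤ 3*C*(4*C)^i*q^4 by positivity),
              mul_le_mul_of_nonneg_right hp1 (show (0:ℝ) ≤ 3*C*q^4*Δt ^ ((1:ℝ)/(4:ℝ)^ℓ) by positivity)]
  constructor
  · intro i hi
    have h1 : (4*C)^i ≤ (4*C)^ℓ := pow_le_pow_right₀ h4C hi
    have h2 := hτpos i
    have h3 := (key i hi).1
    nlinarith [mul_le_mul_of_nonneg_right h1
      (show (0:ℝ) ≤ q^4 * Δt ^ ((1:ℝ)/(4:ℝ)^i) by positivity)]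
  · have hsum : ∑ i ∈ Finset.Icc 1 ℓ, δ i
        ≤ ∑ _i ∈ Finset.Icc 1 ℓ, (3*C*(4*C)^ℓ * q^4 * Δt ^ ((1:ℝ)/(4:ℝ)^ℓ)) := by
      apply Finset.sum_le_sum
      intro i hi
      simp only [Finset.mem_Icc] at hi
      exact (key i hi.2).2 hi.1
    have hcard : ∑ _i ∈ Finset.Icc 1 ℓ, (3*C*(4*C)^ℓ * q^4 * Δt ^ ((1:ℝ)/(4:ℝ)^ℓ))
        = (ℓ:ℝ) * (3*C*(4*C)^ℓ) * q^4 * Δt ^ ((1:ℝ)/(4:ℝ)^ℓ) := by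
      rw [Finset.sum_const, Nat.card_Icc, nsmul_eq_mul]
      simp only [Nat.add_sub_cancel]
      ring
    rw [hcard] at hsum
    linarith
end
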